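/- arXiv:2409.12291 — 6 statements merged into one kernel-verified Lean document; each statement's English description precedes it below -/
import Mathlib

section
/- Let L be a lattice and a, b ∈ L with a ≤ b. Assume the interval [a,b] is finite and the mapping x ↦ (x^{ab})^{ab} from [a,b] to subsets of [a,b] is injective. Then for every c ∈ [a,b] there exists some d ∈ (c^{ab})^{ab} with (d^{ab})^{ab} = {d}. -/
/-!
Being relative complements in `[a,b]` is a symmetric relation, so `A ↦ A^{ab}` is an antitone
Galois connection with itself and `A ↦ (A^{ab})^{ab}` is a closure operator on subsets of `[a,b]`.
Hence `d ∈ (c^{ab})^{ab}` forces `(d^{ab})^{ab} ⊆ (c^{ab})^{ab}`. Choose `d` in `(c^{ab})^{ab}`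
whose double complement is minimal under inclusion; every `e ∈ (d^{ab})^{ab}` then has the same
double complement as `d`, so `e = d` by injectivity.
-/

/-- `A^{ab}`: the set of common relative complements in `[a,b]` of all elements of `A`. -/
def relCompl {L : Type*} [Lattice L] (a b : L) (A : Set L) : Set L :=
  {y ∈ Set.Icc a b | ∀ x ∈ A, x ⊔ y = b ∧ x ⊓ y = a}

section RelCompl

variable {L : Type*} [Lattice L] {a b : L}

theorem relCompl_subset_Icc (A : Set L) : relCompl a b A ⊆ Set.Icc a b :=
  fun _ hy => hy.1

theorem relCompl_antitone : Antitone (relCompl a b) :=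
  fun _ _ hAB _ hy => ⟨hy.1, fun x hx => hy.2 x (hAB hx)⟩

theorem subset_relCompl_relCompl {A : Set L} (hA : A ⊆ Set.Icc a b) :
    A ⊆ relCompl a b (relCompl a b A) := by
  intro x hx
  refine ⟨hA hx, fun y hy => ?_⟩
  obtain ⟨hsup, hinf⟩ := hy.2 x hx
  exact ⟨sup_comm x y ▸ hsup, inf_comm x y ▸ hinf⟩

theorem relCompl_relCompl_relCompl {A : Set L} (hA : A ⊆ Set.Icc a b) :
    relCompl a b (relCompl a b (relCompl a b A)) = relCompl a b A :=
  (relCompl_antitone (subset_relCompl_relCompl hA)).antisymm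
    (subset_relCompl_relCompl (relCompl_subset_Icc A))

theorem mem_relCompl_relCompl_singleton_self {x : L} (hx : x ∈ Set.Icc a b) :
    x ∈ relCompl a b (relCompl a b {x}) :=
  subset_relCompl_relCompl (Set.singleton_subset_iff.mpr hx) rfl

theorem relCompl_relCompl_singleton_subset {x y : L}
    (hy : y ∈ relCompl a b (relCompl a b {x})) :
    relCompl a b (relCompl a b {y}) ⊆ relCompl a b (relCompl a b {x}) := by
  have hsub : relCompl a b (relCompl a b {y}) ⊆
      relCompl a b (relCompl a b (relCompl a b (relCompl a b {x}))) :=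
    relCompl_antitone (relCompl_antitone (Set.singleton_subset_iff.mpr hy))
  rwa [relCompl_relCompl_relCompl (relCompl_subset_Icc _)] at hsub

end RelCompl

theorem exists_fixed_point_in_double_relCompl_general
    {L : Type*} [Lattice L] (a b : L)
    (hfin : (Set.Icc a b).Finite)
    (hinj : ∀ c ∈ Set.Icc a b, ∀ d ∈ Set.Icc a b,
      relCompl a b (relCompl a b {c}) = relCompl a b (relCompl a b {d}) → c = d)
    (c : L) (hc : c ∈ Set.Icc a b) :
    ∃ d ∈ relCompl a b (relCompl a b {c}),
      relCompl a b (relCompl a b {d}) = {d} := by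
  set S := relCompl a b (relCompl a b {c})
  obtain ⟨d, hdS, hdmin⟩ := Set.Finite.exists_minimalFor
    (fun y => relCompl a b (relCompl a b {y})) S
    (hfin.subset (relCompl_subset_Icc _)) ⟨c, mem_relCompl_relCompl_singleton_self hc⟩
  have hdS' : relCompl a b (relCompl a b {d}) ⊆ S := relCompl_relCompl_singleton_subset hdS
  refine ⟨d, hdS, Set.eq_singleton_iff_unique_mem.mpr
    ⟨mem_relCompl_relCompl_singleton_self hdS.1, fun e he => ?_⟩⟩
  have hed := relCompl_relCompl_singleton_subset he
  exact hinj e he.1 d hdS.1 (hed.antisymm (hdmin (hdS' he) hed))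

theorem exists_fixed_point_in_double_relCompl
    {L : Type*} [Lattice L] (a b : L) (hab : a ≤ b)
    (hfin : (Set.Icc a b).Finite)
    (hinj : ∀ c ∈ Set.Icc a b, ∀ d ∈ Set.Icc a b,
      relCompl a b (relCompl a b {c}) = relCompl a b (relCompl a b {d}) → c = d)
    (c : L) (hc : c ∈ Set.Icc a b) :
    ∃ d ∈ relCompl a b (relCompl a b {c}),
      relCompl a b (relCompl a b {d}) = {d} :=
  exists_fixed_point_in_double_relCompl_general a b hfin hinj c hc
end

section
/- Let L be a lattice, a, b ∈ L with a < b, and assume every element of [a,b] has a relative complement in [a,b] (x^{ab} ≠ ∅ for all x ∈ [a,b]). Then the following are equivalent: (ii) for all x, y ∈ [a,b], x ≤ y implies y^{ab} ≤₁ x^{ab}; (iii) (x ⊔ y)^{ab} ≤₁ x^{ab} ∧ y^{ab} for all x, y ∈ [a,b]. -/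
/-- `x^{ab}`: the set of relative complements of `x` in `[a,b]`. -/
def relComplE {L : Type*} [Lattice L] (a b x : L) : Set L :=
  {y ∈ Set.Icc a b | x ⊔ y = b ∧ x ⊓ y = a}

/-- `A ≤₁ B`: every element of `A` lies below some element of `B`. -/
def le1 {L : Type*} [Lattice L] (A B : Set L) : Prop :=
  ∀ u ∈ A, ∃ v ∈ B, u ≤ v

theorem le1_antitone_iff_join_relCompl_le1_meet
    {L : Type*} [Lattice L] (a b : L) (hab : a < b)
    (hrc : ∀ x ∈ Set.Icc a b, (relComplE a b x).Nonempty) :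
    (∀ x ∈ Set.Icc a b, ∀ y ∈ Set.Icc a b, x ≤ y →
      le1 (relComplE a b y) (relComplE a b x)) ↔
    (∀ x ∈ Set.Icc a b, ∀ y ∈ Set.Icc a b,
      le1 (relComplE a b (x ⊔ y))
        (Set.image2 (· ⊓ ·) (relComplE a b x) (relComplE a b y))) := by
  constructor
  · intro h x hx y hy u hu
    have hxy : x ⊔ y ∈ Set.Icc a b :=
      ⟨le_trans hx.1 le_sup_left, sup_le hx.2 hy.2⟩
    obtain ⟨v, hv, huv⟩ := h x hx (x ⊔ y) hxy le_sup_left u hu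
    obtain ⟨w, hw, huw⟩ := h y hy (x ⊔ y) hxy le_sup_right u hu
    exact ⟨v ⊓ w, Set.mem_image2_of_mem hv hw, le_inf huv huw⟩
  · intro h x hx y hy hxy u hu
    have hy' : x ⊔ y = y := sup_eq_right.mpr hxy
    obtain ⟨z, hz, huz⟩ := h x hx y hy u (by rwa [hy'])
    obtain ⟨v, hv, w, hw, rfl⟩ := hz
    exact ⟨v, hv, le_trans huz inf_le_left⟩
end

section
/- Let L be a lattice, a, b ∈ L with a < b, and assume every element of [a,b] has a relative complement in [a,b] (x^{ab} ≠ ∅ for all x ∈ [a,b]). If x^{ab} ∨ y^{ab} ⊆ (x ⊓ y)^{ab} for all x, y ∈ [a,b], then x^{ab} ∨ y^{ab} ≤₁ (x ⊓ y)^{ab} for all x, y ∈ [a,b], x ≤ y implies y^{ab} ≤₁ x^{ab} for all x, y ∈ [a,b], and (x ⊔ y)^{ab} ≤₁ x^{ab} ∧ y^{ab} for all x, y ∈ [a,b]. -/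
theorem join_subset_implies_le1_properties
    {L : Type*} [Lattice L] (a b : L) (hab : a < b)
    (hrc : ∀ x ∈ Set.Icc a b, (relComplE a b x).Nonempty)
    (h : ∀ x ∈ Set.Icc a b, ∀ y ∈ Set.Icc a b,
      Set.image2 (· ⊔ ·) (relComplE a b x) (relComplE a b y) ⊆
        relComplE a b (x ⊓ y)) :
    (∀ x ∈ Set.Icc a b, ∀ y ∈ Set.Icc a b,
      le1 (Set.image2 (· ⊔ ·) (relComplE a b x) (relComplE a b y))
        (relComplE a b (x ⊓ y))) ∧
    (∀ x ∈ Set.Icc a b, ∀ y ∈ Set.Icc a b, x ≤ y →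
      le1 (relComplE a b y) (relComplE a b x)) ∧
    (∀ x ∈ Set.Icc a b, ∀ y ∈ Set.Icc a b,
      le1 (relComplE a b (x ⊔ y))
        (Set.image2 (· ⊓ ·) (relComplE a b x) (relComplE a b y))) := by
  have key : ∀ x ∈ Set.Icc a b, ∀ y ∈ Set.Icc a b, x ≤ y →
      le1 (relComplE a b y) (relComplE a b x) := by
    intro x hx y hy hxy u hu
    obtain ⟨w, hw⟩ := hrc x hx
    refine ⟨w ⊔ u, ?_, le_sup_right⟩
    have := h x hx y hy (Set.mem_image2_of_mem hw hu)
    rwa [inf_eq_left.mpr hxy] at this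
  refine ⟨?_, key, ?_⟩
  · intro x hx y hy u hu
    exact ⟨u, h x hx y hy hu, le_rfl⟩
  · intro x hx y hy u hu
    have hxy : x ⊔ y ∈ Set.Icc a b :=
      ⟨le_trans hx.1 le_sup_left, sup_le hx.2 hy.2⟩
    obtain ⟨v₁, hv₁, huv₁⟩ := key x hx (x ⊔ y) hxy le_sup_left u hu
    obtain ⟨v₂, hv₂, huv₂⟩ := key y hy (x ⊔ y) hxy le_sup_right u hu
    exact ⟨v₁ ⊓ v₂, Set.mem_image2_of_mem hv₁ hv₂, le_inf huv₁ huv₂⟩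
end

section
/- Let L be a lattice, a, b ∈ L with a < b, and assume every element of [a,b] has a relative complement in [a,b] (x^{ab} ≠ ∅ for all x ∈ [a,b]). If x^{ab} ∨ y^{ab} ⊆ (x ⊓ y)^{ab} for all x, y ∈ [a,b] and x^{ab} ∧ y^{ab} ⊆ (x ⊔ y)^{ab} for all x, y ∈ [a,b], then (x ⊔ y)^{ab} =₁ x^{ab} ∧ y^{ab} for all x, y ∈ [a,b], i.e. both (x ⊔ y)^{ab} ≤₁ x^{ab} ∧ y^{ab} and x^{ab} ∧ y^{ab} ≤₁ (x ⊔ y)^{ab}. -/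
theorem join_and_meet_subset_imply_eq1
    {L : Type*} [Lattice L] (a b : L) (hab : a < b)
    (hrc : ∀ x ∈ Set.Icc a b, (relComplE a b x).Nonempty)
    (h4 : ∀ x ∈ Set.Icc a b, ∀ y ∈ Set.Icc a b,
      Set.image2 (· ⊔ ·) (relComplE a b x) (relComplE a b y) ⊆
        relComplE a b (x ⊓ y))
    (h5 : ∀ x ∈ Set.Icc a b, ∀ y ∈ Set.Icc a b,
      Set.image2 (· ⊓ ·) (relComplE a b x) (relComplE a b y) ⊆
        relComplE a b (x ⊔ y)) :
    ∀ x ∈ Set.Icc a b, ∀ y ∈ Set.Icc a b,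
      le1 (relComplE a b (x ⊔ y))
        (Set.image2 (· ⊓ ·) (relComplE a b x) (relComplE a b y)) ∧
      le1 (Set.image2 (· ⊓ ·) (relComplE a b x) (relComplE a b y))
        (relComplE a b (x ⊔ y)) := by
  intro x hx y hy
  constructor
  · -- hard direction
    intro u hu
    obtain ⟨⟨hau, hub⟩, husup, huinf⟩ := hu
    -- key claim: for z ∈ [a,b] with z ≤ x ⊔ y, there is a complement of z above u
    have key : ∀ z ∈ Set.Icc a b, z ≤ x ⊔ y →
        ∃ w ∈ relComplE a b z, u ≤ w := by
      intro z hz hzxy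
      have hzu : z ⊔ u ∈ Set.Icc a b := ⟨le_trans hz.1 le_sup_left, sup_le hz.2 hub⟩
      obtain ⟨c, hc⟩ := hrc (z ⊔ u) hzu
      have hxy : x ⊔ y ∈ Set.Icc a b :=
        ⟨le_trans hx.1 le_sup_left, sup_le hx.2 hy.2⟩
      have hcu : c ⊔ u ∈ relComplE a b ((z ⊔ u) ⊓ (x ⊔ y)) := by
        apply h4 (z ⊔ u) hzu (x ⊔ y) hxy
        exact ⟨c, hc, u, ⟨⟨hau, hub⟩, husup, huinf⟩, rfl⟩
      obtain ⟨hcuIcc, hcusup, hcuinf⟩ := hcu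
      refine ⟨c ⊔ u, ⟨hcuIcc, ?_, ?_⟩, le_sup_right⟩
      · -- z ⊔ (c ⊔ u) = b
        have : z ⊔ u ⊔ c = b := hc.2.1
        calc z ⊔ (c ⊔ u) = z ⊔ u ⊔ c := by
              rw [sup_comm c u, ← sup_assoc]
          _ = b := this
      · -- z ⊓ (c ⊔ u) = a
        apply le_antisymm
        · calc z ⊓ (c ⊔ u) ≤ (z ⊔ u) ⊓ (x ⊔ y) ⊓ (c ⊔ u) := by
                apply le_inf (le_inf ?_ ?_) inf_le_right
                · exact le_trans inf_le_left le_sup_left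
                · exact le_trans inf_le_left hzxy
            _ = a := hcuinf
        · exact le_inf hz.1 hcuIcc.1
    obtain ⟨x', hx', hux'⟩ := key x hx le_sup_left
    obtain ⟨y', hy', huy'⟩ := key y hy le_sup_right
    exact ⟨x' ⊓ y', ⟨x', hx', y', hy', rfl⟩, le_inf hux' huy'⟩
  · intro u hu
    exact ⟨u, h5 x hx y hy hu, le_rfl⟩
end

section
/- Let L be a lattice and a, b ∈ L with a ≤ b, and assume the interval [a,b] is a modular sublattice of L (for all x, y, z ∈ [a,b] with x ≤ z one has x ⊔ (y ⊓ z) = (x ⊔ y) ⊓ z). Then the following are equivalent: (i) (x^{ab})^{ab} = {x} for every x ∈ [a,b]; (ii) for every x ∈ [a,b] and every y ∈ (x^{ab})^{ab} there exists some z ∈ y^{ab} satisfying (x ⊔ y) ⊓ z = a or (x ⊓ y) ⊔ z = b. -/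
lemma mem_relCompl_iff {L : Type*} [Lattice L] (a b : L) (A : Set L) (y : L) :
    y ∈ relCompl a b A ↔ y ∈ Set.Icc a b ∧ ∀ x ∈ A, x ⊔ y = b ∧ x ⊓ y = a := Iff.rfl

theorem double_relCompl_identity_iff
    {L : Type*} [Lattice L] (a b : L) (hab : a ≤ b)
    (hmod : ∀ x ∈ Set.Icc a b, ∀ y ∈ Set.Icc a b, ∀ z ∈ Set.Icc a b,
      x ≤ z → x ⊔ (y ⊓ z) = (x ⊔ y) ⊓ z) :
    (∀ x ∈ Set.Icc a b, relCompl a b (relCompl a b {x}) = {x}) ↔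
    (∀ x ∈ Set.Icc a b, ∀ y ∈ relCompl a b (relCompl a b {x}),
      ∃ z ∈ relCompl a b {y}, (x ⊔ y) ⊓ z = a ∨ (x ⊓ y) ⊔ z = b) := by
  constructor
  · intro h x hx y hy
    rw [h x hx, Set.mem_singleton_iff] at hy
    rw [hy]
    by_cases hne : (relCompl a b {x}).Nonempty
    · obtain ⟨z, hz⟩ := hne
      refine ⟨z, hz, Or.inl ?_⟩
      have := (hz.2 x rfl).2
      simpa using this
    · exfalso
      have hIcc : relCompl a b (relCompl a b {x}) = Set.Icc a b := by
        ext u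
        simp only [mem_relCompl_iff]
        exact ⟨fun h => h.1, fun hu => ⟨hu, fun v hv => absurd ⟨v, hv⟩ hne⟩⟩
      rw [h x hx] at hIcc
      have ha : a ∈ ({x} : Set L) := by rw [hIcc]; exact ⟨le_refl a, hab⟩
      have hb : b ∈ ({x} : Set L) := by rw [hIcc]; exact ⟨hab, le_refl b⟩
      rw [Set.mem_singleton_iff] at ha hb
      apply hne
      refine ⟨x, ⟨hx, fun v hv => ?_⟩⟩
      rw [Set.mem_singleton_iff] at hv
      subst hv
      exact ⟨by simp [← hb], by simp [← ha]⟩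
  · intro h x hx
    have hxmem : x ∈ relCompl a b (relCompl a b {x}) := by
      refine ⟨hx, fun u hu => ?_⟩
      obtain ⟨h1, h2⟩ := hu.2 x rfl
      exact ⟨by rw [sup_comm]; exact h1, by rw [inf_comm]; exact h2⟩
    -- obtain t ∈ x^⊥
    obtain ⟨t, ht, -⟩ := h x hx x hxmem
    have htx : x ⊔ t = b ∧ x ⊓ t = a := ht.2 x rfl
    ext y
    simp only [Set.mem_singleton_iff]
    constructor
    · intro hy
      obtain ⟨z, hz, hcase⟩ := h x hx y hy
      have hzy : y ⊔ z = b ∧ y ⊓ z = a := hz.2 y rfl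
      have hty : t ⊔ y = b ∧ t ⊓ y = a := hy.2 t ht
      rcases hcase with hca | hcb
      · -- (x ⊔ y) ⊓ z = a ⟹ x ≤ y ⟹ x = y
        have hxy : x ⊔ y ∈ Set.Icc a b :=
          ⟨le_trans hx.1 le_sup_left, sup_le hx.2 hy.1.2⟩
        have h1 := hmod y hy.1 z hz.1 (x ⊔ y) hxy le_sup_right
        rw [inf_comm z (x ⊔ y), hca, hzy.1, sup_of_le_left hy.1.1,
            inf_of_le_right hxy.2] at h1
        -- h1 : y = x ⊔ y
        have hxley : x ≤ y := by rw [h1]; exact le_sup_left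
        have h2 := hmod x hx t ht.1 y hy.1 hxley
        rw [hty.2, htx.1, sup_of_le_left hx.1, inf_of_le_right hy.1.2] at h2
        exact h2.symm
      · -- (x ⊓ y) ⊔ z = b ⟹ y ≤ x ⟹ y = x
        have hxy : x ⊓ y ∈ Set.Icc a b :=
          ⟨le_inf hx.1 hy.1.1, le_trans inf_le_left hx.2⟩
        have h1 := hmod (x ⊓ y) hxy z hz.1 y hy.1 inf_le_right
        rw [inf_comm z y, hzy.2, hcb, sup_of_le_left hxy.1,
            inf_of_le_right hy.1.2] at h1
        -- h1 : x ⊓ y = y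
        have hylex : y ≤ x := by rw [← h1]; exact inf_le_left
        have h2 := hmod y hy.1 t ht.1 x hx hylex
        rw [inf_comm t x, htx.2, sup_comm y t, hty.1, sup_of_le_left hy.1.1,
            inf_of_le_right hx.2] at h2
        exact h2
    · intro hy; subst hy; exact hxmem
end

section
/- Let (L_i)_{i ∈ I} be a family of lattices such that for every i ∈ I, all a, b ∈ L_i with a ≤ b and all c ∈ [a,b] one has (c^{ab})^{ab} = {c}. Then the product lattice ∏_{i ∈ I} L_i (with componentwise order) also satisfies (c^{ab})^{ab} = {c} for all a ≤ b in ∏ L_i and all c ∈ [a,b]; i.e. the property (x^{ab})^{ab} = {x} is preserved under forming direct products of lattices. -/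
theorem double_relCompl_identity_prod
    {I : Type*} (L : I → Type*) [∀ i, Lattice (L i)]
    (h : ∀ i : I, ∀ a b : L i, a ≤ b → ∀ c ∈ Set.Icc a b,
      relCompl a b (relCompl a b {c}) = {c}) :
    ∀ a b : (∀ i, L i), a ≤ b → ∀ c ∈ Set.Icc a b,
      relCompl a b (relCompl a b {c}) = {c} := by
  intro a b hab c hc
  -- every component has at least one relative complement of `c j`
  have hex : ∀ j, ∃ zj, zj ∈ relCompl (a j) (b j) {c j} := by
    intro j
    by_contra hne
    push_neg at hne
    have hemp : relCompl (a j) (b j) ({c j} : Set (L j)) = ∅ :=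
      Set.eq_empty_iff_forall_notMem.2 hne
    have h2 := h j (a j) (b j) (hab j) (c j) ⟨hc.1 j, hc.2 j⟩
    rw [hemp] at h2
    have hIcc : relCompl (a j) (b j) (∅ : Set (L j)) = Set.Icc (a j) (b j) := by
      ext y; simp [relCompl]
    rw [hIcc] at h2
    have habj : a j = c j ∧ b j = c j := by
      constructor
      · have h3 : a j ∈ Set.Icc (a j) (b j) := ⟨le_refl _, hab j⟩
        rw [h2] at h3; exact h3
      · have h3 : b j ∈ Set.Icc (a j) (b j) := ⟨hab j, le_refl _⟩
        rw [h2] at h3; exact h3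
    apply hne (c j)
    refine ⟨⟨hc.1 j, hc.2 j⟩, ?_⟩
    intro x hx
    rw [Set.mem_singleton_iff] at hx; rw [hx]
    refine ⟨?_, ?_⟩
    · rw [sup_idem]; exact habj.2.symm
    · rw [inf_idem]; exact habj.1.symm
  haveI := Classical.decEq I
  choose z hz using hex
  ext d
  simp only [Set.mem_singleton_iff]
  constructor
  · rintro ⟨hdIcc, hd⟩
    funext i
    have hmem : d i ∈ relCompl (a i) (b i) (relCompl (a i) (b i) {c i}) := by
      refine ⟨⟨hdIcc.1 i, hdIcc.2 i⟩, ?_⟩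
      intro y hy
      set Y : ∀ j, L j := Function.update z i y with hYdef
      have hYi : Y i = y := Function.update_self i y z
      have hYj : ∀ j, j ≠ i → Y j = z j := fun j hji => Function.update_of_ne hji y z
      have hYmem : Y ∈ relCompl a b ({c} : Set (∀ j, L j)) := by
        refine ⟨⟨fun j => ?_, fun j => ?_⟩, ?_⟩
        · by_cases hji : j = i
          · subst hji; rw [hYi]; exact hy.1.1
          · rw [hYj j hji]; exact (hz j).1.1
        · by_cases hji : j = i
          · subst hji; rw [hYi]; exact hy.1.2
          · rw [hYj j hji]; exact (hz j).1.2
        · intro x hx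
          rw [Set.mem_singleton_iff] at hx; rw [hx]
          constructor
          · funext j
            show c j ⊔ Y j = b j
            by_cases hji : j = i
            · subst hji; rw [hYi]; exact (hy.2 (c j) rfl).1
            · rw [hYj j hji]; exact ((hz j).2 (c j) rfl).1
          · funext j
            show c j ⊓ Y j = a j
            by_cases hji : j = i
            · subst hji; rw [hYi]; exact (hy.2 (c j) rfl).2
            · rw [hYj j hji]; exact ((hz j).2 (c j) rfl).2
      have hd' := hd Y hYmem
      constructor
      · have := congrFun hd'.1 i
        rw [Pi.sup_apply, hYi] at this; exact this
      · have := congrFun hd'.2 i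
        rw [Pi.inf_apply, hYi] at this; exact this
    have := h i (a i) (b i) (hab i) (c i) ⟨hc.1 i, hc.2 i⟩
    rw [this] at hmem
    exact hmem
  · rintro rfl
    refine ⟨hc, ?_⟩
    intro x hx
    exact ⟨by rw [sup_comm]; exact (hx.2 d rfl).1, by rw [inf_comm]; exact (hx.2 d rfl).2⟩
end
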